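/- arXiv:2105.14497 — 3 statements merged into one kernel-verified Lean document; each statement's English description precedes it below -/
import Mathlib

section
/- For 𝕜-modules V and W and a natural number q, there is a natural isomorphism (V ⊕ W)^{⊗q} ≅ ⨁_{J ⊆ {1,…,q}} V^{⊗|J|} ⊗ W^{⊗(q−|J|)}, where the sum runs over all subsets J of {1,…,q}. -/
open scoped TensorProduct DirectSum

/-!
Expanding `⨂ᵢ (vᵢ, wᵢ) = ⨂ᵢ ((vᵢ, 0) + (0, wᵢ))` multilinearly gives a sum over the subsets `J`
of positions at which the `V`-coordinate is chosen, and the `J`-th term is the image of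
`(⨂_{i ∈ J} vᵢ) ⊗ (⨂_{i ∉ J} wᵢ)` under the inclusion of the `J`-th summand. Conversely, projecting
the inclusion of the `J`-th summand onto the `K`-th one gives zero for `K ≠ J`, since the resulting
pure tensors have a vanishing coordinate. The projections are built from `fst`, `snd` and
reindexings, so they commute with the maps induced by `f × g`.
-/

namespace PiTensorProduct

open TensorProduct

variable {R ι V W : Type*} [CommSemiring R] [DecidableEq ι]
  [AddCommMonoid V] [Module R V] [AddCommMonoid W] [Module R W]

noncomputable def projSummand (J : Finset ι) :
    (⨂[R] _ : ι, V × W) →ₗ[R] (⨂[R] _ : J, V) ⊗[R] (⨂[R] _ : {i // i ∉ J}, W) :=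
  TensorProduct.map (map fun _ => LinearMap.fst R V W) (map fun _ => LinearMap.snd R V W)
    ∘ₗ (tmulEquiv R (V × W)).symm.toLinearMap
    ∘ₗ (reindex R (fun _ => V × W) (Equiv.sumCompl (· ∈ J)).symm).toLinearMap

@[simp]
theorem projSummand_tprod (J : Finset ι) (v : ι → V × W) :
    projSummand J (tprod R v) =
      (⨂ₜ[R] i : J, (v i).1) ⊗ₜ (⨂ₜ[R] i : {i // i ∉ J}, (v i).2) := by
  simp [projSummand]

noncomputable def inclSummand (J : Finset ι) :
    (⨂[R] _ : J, V) ⊗[R] (⨂[R] _ : {i // i ∉ J}, W) →ₗ[R] ⨂[R] _ : ι, V × W :=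
  (reindex R (fun _ => V × W) (Equiv.sumCompl (· ∈ J))).toLinearMap
    ∘ₗ (tmulEquiv R (V × W)).toLinearMap
    ∘ₗ TensorProduct.map (map fun _ => LinearMap.inl R V W) (map fun _ => LinearMap.inr R V W)

@[simp]
theorem inclSummand_tmul (J : Finset ι) (a : J → V) (b : {i // i ∉ J} → W) :
    inclSummand J (tprod R a ⊗ₜ tprod R b) =
      ⨂ₜ[R] i, if h : i ∈ J then (a ⟨i, h⟩, 0) else (0, b ⟨i, h⟩) := by
  simp only [inclSummand, LinearMap.comp_apply, LinearEquiv.coe_coe, TensorProduct.map_tmul,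
    map_tprod, tmulEquiv_apply, reindex_tprod]
  congr 1
  funext i
  by_cases h : i ∈ J <;> simp [h]

theorem projSummand_comp_inclSummand (J : Finset ι) :
    projSummand (R := R) (V := V) (W := W) J ∘ₗ inclSummand J = LinearMap.id := by
  ext a b
  have hJc (i : {i // i ∉ J}) : (i : ι) ∉ J := i.2
  simp [hJc]

theorem projSummand_comp_inclSummand_of_ne {J K : Finset ι} (h : J ≠ K) :
    projSummand (R := R) (V := V) (W := W) K ∘ₗ inclSummand J = 0 := by
  ext a b
  simp only [LinearMap.compMultilinearMap_apply, AlgebraTensorModule.curry_apply,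
    LinearMap.restrictScalars_self, curry_apply, LinearMap.coe_comp, Function.comp_apply,
    inclSummand_tmul, projSummand_tprod, LinearMap.zero_apply]
  by_cases hKJ : K ⊆ J
  · obtain ⟨i, hiJ, hiK⟩ := Finset.exists_of_ssubset (hKJ.ssubset_of_ne h.symm)
    rw [(tprod R).map_coord_zero (⟨i, hiK⟩ : {i // i ∉ K}) (by simp [hiJ]), tmul_zero]
  · obtain ⟨i, hiK, hiJ⟩ := Finset.not_subset.mp hKJ
    rw [(tprod R).map_coord_zero (⟨i, hiK⟩ : K) (by simp [hiJ]), zero_tmul]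

section Fintype

variable [Fintype ι]

theorem sum_inclSummand_comp_projSummand :
    ∑ J : Finset ι, inclSummand J ∘ₗ projSummand J =
      (LinearMap.id : (⨂[R] _ : ι, V × W) →ₗ[R] _) := by
  ext v
  have hv : v = (fun i => ((v i).1, 0)) + fun i => (0, (v i).2) := by ext <;> simp
  simp only [LinearMap.compMultilinearMap_apply, LinearMap.coe_sum, Finset.sum_apply,
    LinearMap.id_apply]
  conv_rhs => rw [hv, (tprod R).map_add_univ]
  refine Finset.sum_congr rfl fun J _ => ?_
  simp only [LinearMap.comp_apply, projSummand_tprod, inclSummand_tmul]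
  -- `Finset.piecewise` unfolds to the `dite` of `inclSummand_tmul`
  rfl

variable (R ι V W) in
noncomputable def splitSummands :
    (⨂[R] _ : ι, V × W) →ₗ[R] ⨁ J : Finset ι, (⨂[R] _ : J, V) ⊗[R] (⨂[R] _ : {i // i ∉ J}, W) :=
  ∑ J, DirectSum.lof R _ _ J ∘ₗ projSummand J

@[simp]
theorem splitSummands_apply (x : ⨂[R] _ : ι, V × W) (J : Finset ι) :
    splitSummands R ι V W x J = projSummand J x := by
  simp [splitSummands, DirectSum.lof_eq_of, DirectSum.of_apply]

theorem splitSummands_comp_toModule_inclSummand :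
    splitSummands R ι V W ∘ₗ DirectSum.toModule R (Finset ι) _ inclSummand = LinearMap.id := by
  refine DirectSum.linearMap_ext R fun J => LinearMap.ext fun y => DirectSum.ext fun K => ?_
  simp only [LinearMap.comp_apply, DirectSum.toModule_lof, splitSummands_apply, LinearMap.id_apply]
  rcases eq_or_ne J K with rfl | h
  · simpa using LinearMap.congr_fun (projSummand_comp_inclSummand J) y
  · rw [DirectSum.lof_eq_of, DirectSum.of_eq_of_ne _ _ _ h.symm]
    exact LinearMap.congr_fun (projSummand_comp_inclSummand_of_ne h) y

theorem toModule_inclSummand_comp_splitSummands :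
    DirectSum.toModule R (Finset ι) _ inclSummand ∘ₗ splitSummands R ι V W = LinearMap.id := by
  refine LinearMap.ext fun x => ?_
  simpa [splitSummands] using LinearMap.congr_fun sum_inclSummand_comp_projSummand x

variable (R ι V W) in
noncomputable def prodEquivDirectSum :
    (⨂[R] _ : ι, V × W) ≃ₗ[R]
      ⨁ J : Finset ι, (⨂[R] _ : J, V) ⊗[R] (⨂[R] _ : {i // i ∉ J}, W) :=
  .ofLinearMap _ _ splitSummands_comp_toModule_inclSummand toModule_inclSummand_comp_splitSummands

@[simp]
theorem prodEquivDirectSum_apply (x : ⨂[R] _ : ι, V × W) (J : Finset ι) :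
    prodEquivDirectSum R ι V W x J = projSummand J x :=
  splitSummands_apply x J

end Fintype

variable {V' W' : Type*} [AddCommMonoid V'] [Module R V'] [AddCommMonoid W'] [Module R W']

theorem projSummand_map_prodMap (f : V →ₗ[R] V') (g : W →ₗ[R] W') (J : Finset ι)
    (x : ⨂[R] _ : ι, V × W) :
    projSummand J (map (fun _ => f.prodMap g) x) =
      TensorProduct.map (map fun _ => f) (map fun _ => g) (projSummand J x) := by
  induction x using PiTensorProduct.induction_on with
  | smul_tprod r v => simp
  | add x y hx hy => simp [hx, hy]

theorem congr_reindex_map_map {α α' β β' : Type*} (e₁ : α ≃ α') (e₂ : β ≃ β')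
    (f : V →ₗ[R] V') (g : W →ₗ[R] W') (y : (⨂[R] _ : α, V) ⊗[R] (⨂[R] _ : β, W)) :
    TensorProduct.congr (reindex R (fun _ => V') e₁) (reindex R (fun _ => W') e₂)
        (TensorProduct.map (map fun _ => f) (map fun _ => g) y) =
      TensorProduct.map (map fun _ => f) (map fun _ => g)
        (TensorProduct.congr (reindex R (fun _ => V) e₁) (reindex R (fun _ => W) e₂) y) := by
  induction y using TensorProduct.induction_on with
  | zero => simp
  | tmul a b => simp only [TensorProduct.map_tmul, congr_tmul, ← map_reindex]
  | add y z hy hz => simp [hy, hz]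

end PiTensorProduct

/-- For `𝕜`-modules `V` and `W` and `q ∈ ℕ`, there is a natural isomorphism
`(V ⊕ W)^{⊗q} ≅ ⨁_{J ⊆ {1,…,q}} V^{⊗|J|} ⊗ W^{⊗(q−|J|)}`, the sum running over all subsets
`J` of `{1,…,q}`.  Naturality means the family of isomorphisms commutes, componentwise, with
the maps induced by arbitrary pairs of linear maps `f : V → V'`, `g : W → W'`. -/
theorem stmt_5 (𝕜 : Type) [CommRing 𝕜] (q : ℕ) :
    ∃ e : ∀ (V W : Type) [AddCommGroup V] [Module 𝕜 V] [AddCommGroup W] [Module 𝕜 W],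
        (⨂[𝕜] (_ : Fin q), (V × W)) ≃ₗ[𝕜]
          (⨁ (J : Finset (Fin q)),
            ((⨂[𝕜] (_ : Fin (J.card)), V) ⊗[𝕜] (⨂[𝕜] (_ : Fin (q - J.card)), W))),
      ∀ (V W V' W' : Type) [AddCommGroup V] [Module 𝕜 V] [AddCommGroup W] [Module 𝕜 W]
        [AddCommGroup V'] [Module 𝕜 V'] [AddCommGroup W'] [Module 𝕜 W']
        (f : V →ₗ[𝕜] V') (g : W →ₗ[𝕜] W')
        (x : ⨂[𝕜] (_ : Fin q), (V × W)) (J : Finset (Fin q)),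
        (e V' W' ((PiTensorProduct.map fun _ => f.prodMap g) x)) J =
          (TensorProduct.map (PiTensorProduct.map fun _ => f)
            (PiTensorProduct.map fun _ => g)) ((e V W x) J) := by
  refine ⟨fun V W _ _ _ _ => (PiTensorProduct.prodEquivDirectSum 𝕜 (Fin q) V W).trans
    (DirectSum.congrLinearEquiv fun J => TensorProduct.congr
      (PiTensorProduct.reindex 𝕜 _ J.equivFin)
      (PiTensorProduct.reindex 𝕜 _ (Fintype.equivFinOfCardEq (by simp)))), ?_⟩
  intro V W V' W' _ _ _ _ _ _ _ _ f g x J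
  simp only [LinearEquiv.trans_apply, DirectSum.coe_congrLinearEquiv, DirectSum.lmap_apply,
    LinearEquiv.coe_coe, PiTensorProduct.prodEquivDirectSum_apply,
    PiTensorProduct.projSummand_map_prodMap]
  exact PiTensorProduct.congr_reindex_map_map _ _ f g _
end

section
/- The formula [f]·σ = (∏_{1 ≤ i ≤ l} ε(σ|_{(f∘σ)^{-1}(i)}))·[f∘σ], where σ|_{(f∘σ)^{-1}(i)} denotes the restriction of σ to a bijection (f∘σ)^{-1}(i) → σ((f∘σ)^{-1}(i)) viewed as a permutation via the order-preserving identifications of both sets with {1,…,|(f∘σ)^{-1}(i)|}, defines a right action of the symmetric group S_q on the free 𝕜-module 𝕜[Surj(q,l)] with basis the surjections f : {1,…,q} → {1,…,l}. -/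
/-- The set of surjections `{1,…,q} → {1,…,l}`. -/
def Surj (q l : ℕ) : Type := {f : Fin q → Fin l // Function.Surjective f}

/-- The sign `ε(σ|_{(f∘σ)^{-1}(i)})` of the restriction of `σ` to a bijection
`(f∘σ)^{-1}(i) → f^{-1}(i) = σ((f∘σ)^{-1}(i))`, viewed as a permutation of
`Fin |(f∘σ)^{-1}(i)|` via the order-preserving identifications of source and target with an
initial segment of `ℕ` (given by `Finset.orderIsoOfFin`). -/
noncomputable def restrictSign {q l : ℕ} (f : Fin q → Fin l) (σ : Equiv.Perm (Fin q))
    (i : Fin l) : ℤˣ :=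
  Equiv.Perm.sign
    (((Finset.univ.filter fun x => f (σ x) = i).orderIsoOfFin rfl).toEquiv.trans
      ((σ.subtypeEquiv
          (p := fun x => x ∈ Finset.univ.filter fun x => f (σ x) = i)
          (q := fun x => x ∈ Finset.univ.filter fun x => f x = i)
          (fun a => by simp)).trans
        (((Finset.univ.filter fun x => f x = i).orderIsoOfFin
          (by
            have := Fintype.card_congr
              (σ.subtypeEquiv
                (p := fun x => x ∈ Finset.univ.filter fun x => f (σ x) = i)
                (q := fun x => x ∈ Finset.univ.filter fun x => f x = i)
                (fun a => by simp))
            simpa [Fintype.card_subtype] using this.symm)).toEquiv.symm)))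

/-!
Transporting bijections between finite linearly ordered sets to permutations of `Fin n`
(through the increasing enumerations) is compatible with composition, because the
enumeration of the middle set cancels. Hence the sign of the restriction of `στ` to a fibre
of `f ∘ σ ∘ τ` is the product of the signs of the restrictions of `τ` and `σ`, i.e. the
coefficients `∏ᵢ ε(σ|ᵢ)` form a cocycle for the action `f ↦ f ∘ σ` on surjections, and this
is exactly what makes the signed action on basis vectors associative.
-/

open Equiv Finset

namespace Finset

variable {α : Type*} [LinearOrder α] {s t u : Finset α}

noncomputable def permOfEquiv (h : #t = #s) (e : s ≃ t) : Perm (Fin #s) :=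
  (s.orderIsoOfFin rfl).toEquiv.trans (e.trans (t.orderIsoOfFin h).toEquiv.symm)

theorem permOfEquiv_trans (hst : #t = #s) (htu : #u = #t) (e₁ : s ≃ t) (e₂ : t ≃ u) :
    permOfEquiv (htu.trans hst) (e₁.trans e₂) =
      (finCongr hst).permCongr (permOfEquiv htu e₂) * permOfEquiv hst e₁ := by
  have ht : t.orderIsoOfFin hst = (Fin.castOrderIso hst).symm.trans (t.orderIsoOfFin rfl) :=
    Subsingleton.elim _ _
  have hu : u.orderIsoOfFin (htu.trans hst) =
      (Fin.castOrderIso hst).symm.trans (u.orderIsoOfFin htu) :=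
    Subsingleton.elim _ _
  ext x
  simp [permOfEquiv, ht, hu, Equiv.permCongr_apply]

theorem sign_permOfEquiv_trans (hst : #t = #s) (htu : #u = #t) (e₁ : s ≃ t) (e₂ : t ≃ u) :
    Perm.sign (permOfEquiv (htu.trans hst) (e₁.trans e₂)) =
      Perm.sign (permOfEquiv hst e₁) * Perm.sign (permOfEquiv htu e₂) := by
  rw [permOfEquiv_trans, map_mul, Perm.sign_permCongr, mul_comm]

end Finset

section restrictSign

variable {q l : ℕ}

theorem card_filter_comp_perm (f : Fin q → Fin l) (σ : Perm (Fin q)) (i : Fin l) :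
    #{x | f x = i} = #{x | f (σ x) = i} :=
  (card_equiv σ fun x => by simp).symm

theorem restrictSign_eq_sign_permOfEquiv (f : Fin q → Fin l) (σ : Perm (Fin q)) (i : Fin l) :
    restrictSign f σ i =
      Perm.sign (permOfEquiv (card_filter_comp_perm f σ i) (σ.subtypeEquiv fun _ => by simp)) :=
  rfl

theorem restrictSign_mul (f : Fin q → Fin l) (σ τ : Perm (Fin q)) (i : Fin l) :
    restrictSign f (σ * τ) i = restrictSign f σ i * restrictSign (f ∘ σ) τ i := by
  rw [restrictSign_eq_sign_permOfEquiv, restrictSign_eq_sign_permOfEquiv,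
    restrictSign_eq_sign_permOfEquiv, mul_comm]
  exact sign_permOfEquiv_trans _ _
    (τ.subtypeEquiv (p := (· ∈ ({x | f (σ (τ x)) = i} : Finset _)))
      (q := (· ∈ ({x | f (σ x) = i} : Finset _))) fun _ => by simp)
    (σ.subtypeEquiv fun _ => by simp)

theorem restrictSign_one (f : Fin q → Fin l) (i : Fin l) : restrictSign f 1 i = 1 :=
  left_eq_mul.mp (restrictSign_mul f 1 1 i)

end restrictSign

namespace Surj

variable {q l : ℕ}

def precomp (f : Surj q l) (σ : Perm (Fin q)) : Surj q l :=
  ⟨f.1 ∘ σ, f.2.comp σ.surjective⟩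

theorem precomp_mul (f : Surj q l) (σ τ : Perm (Fin q)) :
    f.precomp (σ * τ) = (f.precomp σ).precomp τ :=
  rfl

theorem precomp_one (f : Surj q l) : f.precomp 1 = f :=
  rfl

noncomputable def fibreSign (f : Surj q l) (σ : Perm (Fin q)) : ℤˣ :=
  ∏ i, restrictSign f.1 σ i

theorem fibreSign_mul (f : Surj q l) (σ τ : Perm (Fin q)) :
    f.fibreSign (σ * τ) = f.fibreSign σ * (f.precomp σ).fibreSign τ := by
  simp only [fibreSign, precomp, restrictSign_mul, prod_mul_distrib]

theorem fibreSign_one (f : Surj q l) : f.fibreSign 1 = 1 := by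
  simp only [fibreSign, restrictSign_one, prod_const_one]

variable (𝕜 : Type*) [CommRing 𝕜]

noncomputable def signedAct (σ : Perm (Fin q)) : (Surj q l →₀ 𝕜) →ₗ[𝕜] (Surj q l →₀ 𝕜) :=
  Finsupp.linearCombination 𝕜 fun f => (f.fibreSign σ : ℤ) • Finsupp.single (f.precomp σ) 1

variable {𝕜}

theorem signedAct_single (σ : Perm (Fin q)) (f : Surj q l) (c : 𝕜) :
    signedAct 𝕜 σ (Finsupp.single f c) =
      (f.fibreSign σ : ℤ) • Finsupp.single (f.precomp σ) c := by
  rw [signedAct, Finsupp.linearCombination_single, smul_comm, Finsupp.smul_single_one]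

theorem signedAct_mul (σ τ : Perm (Fin q)) :
    signedAct (l := l) 𝕜 (σ * τ) = (signedAct 𝕜 τ).comp (signedAct 𝕜 σ) := by
  ext f : 2
  simp only [LinearMap.comp_apply, Finsupp.lsingle_apply, signedAct_single, map_zsmul,
    fibreSign_mul, precomp_mul, Units.val_mul, mul_smul]

theorem signedAct_one : signedAct (q := q) (l := l) 𝕜 1 = LinearMap.id := by
  ext f : 2
  simp only [LinearMap.comp_apply, Finsupp.lsingle_apply, signedAct_single, fibreSign_one,
    precomp_one, Units.val_one, one_smul, LinearMap.id_comp]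

end Surj

/-- The formula
`[f]·σ = (∏_{1 ≤ i ≤ l} ε(σ|_{(f∘σ)^{-1}(i)})) · [f∘σ]` defines a right action of the
symmetric group `S_q` on the free `𝕜`-module `𝕜[Surj(q,l)]` with basis the surjections
`f : {1,…,q} → {1,…,l}`: there is a family of linear operators given on basis elements by
this formula which satisfies `([f]·σ)·τ = [f]·(στ)` and `[f]·id = [f]`. -/
theorem stmt_7 (𝕜 : Type) [CommRing 𝕜] (q l : ℕ) :
    ∃ act : Equiv.Perm (Fin q) → ((Surj q l →₀ 𝕜) →ₗ[𝕜] (Surj q l →₀ 𝕜)),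
      (∀ (σ : Equiv.Perm (Fin q)) (f : Surj q l),
        act σ (Finsupp.single f 1) =
          ((∏ i : Fin l, restrictSign f.1 σ i : ℤˣ) : ℤ) •
            Finsupp.single (⟨f.1 ∘ σ, f.2.comp σ.surjective⟩ : Surj q l) (1 : 𝕜)) ∧
      (∀ σ τ : Equiv.Perm (Fin q), act (σ * τ) = (act τ).comp (act σ)) ∧
      act 1 = LinearMap.id :=
  ⟨Surj.signedAct 𝕜, fun σ f => Surj.signedAct_single σ f 1, Surj.signedAct_mul,
    Surj.signedAct_one⟩
end

section
/- For a field 𝕜 of characteristic 0 and natural numbers i, j, the composite of the comultiplication Λ^{i+j}V → Λ^iV ⊗ Λ^jV with the multiplication Λ^iV ⊗ Λ^jV → Λ^{i+j}V of the exterior algebra of a 𝕜-vector space V equals multiplication by the binomial coefficient C(i+j, i) on Λ^{i+j}V. -/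
open scoped TensorProduct

variable (𝕜 : Type) [Field 𝕜] (V : Type) [AddCommGroup V] [Module 𝕜 V]

/-- The wedge `v₁ ∧ … ∧ v_k`, as an element of the `k`-th exterior power `⋀[𝕜]^k V`. -/
noncomputable def wedge (k : ℕ) (v : Fin k → V) : ⋀[𝕜]^k V :=
  ⟨ExteriorAlgebra.ιMulti 𝕜 k v, ExteriorAlgebra.ιMulti_range 𝕜 k ⟨v, rfl⟩⟩

/-- The `(i,j)`-shuffle permutation associated to a subset `S ⊆ {1,…,i+j}` of cardinality
`i`: it sends `{1,…,i}` order-preservingly onto `S` and `{i+1,…,i+j}` order-preservingly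
onto the complement of `S`. -/
noncomputable def shufflePerm (i j : ℕ) (S : Finset (Fin (i + j))) (hS : S.card = i) :
    Equiv.Perm (Fin (i + j)) :=
  finSumFinEquiv.symm.trans
    ((Equiv.sumCongr (S.orderIsoOfFin hS).toEquiv
        ((Sᶜ).orderIsoOfFin (by simp [Finset.card_compl, hS])).toEquiv).trans
      ((Equiv.sumCongr (Equiv.refl _) (Equiv.subtypeEquivRight (fun x => by simp))).trans
        (Equiv.sumCompl (· ∈ S))))

lemma append_comp_orderIsoOfFin_eq_comp_shufflePerm {α : Type*} (i j : ℕ)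
    (S : Finset (Fin (i + j))) (hS : S.card = i) (hSc : Sᶜ.card = j) (v : Fin (i + j) → α) :
    Fin.append (fun k => v (S.orderIsoOfFin hS k)) (fun k => v ((Sᶜ).orderIsoOfFin hSc k))
      = v ∘ shufflePerm i j S hS := by
  funext x
  obtain ⟨y | y, rfl⟩ := finSumFinEquiv.surjective x
  · simp [shufflePerm]
  · simp [shufflePerm]

lemma span_range_wedge (n : ℕ) : Submodule.span 𝕜 (Set.range (wedge 𝕜 V n)) = ⊤ := by
  apply Submodule.map_injective_of_injective (⋀[𝕜]^n V).injective_subtype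
  rw [Submodule.map_span, Submodule.map_top, Submodule.range_subtype, ← Set.range_comp]
  exact ExteriorAlgebra.ιMulti_span_fixedDegree 𝕜 n

lemma wedge_comp_perm (n : ℕ) (v : Fin n → V) (σ : Equiv.Perm (Fin n)) :
    wedge 𝕜 V n (v ∘ σ) = (Equiv.Perm.sign σ : ℤ) • wedge 𝕜 V n v :=
  Subtype.ext (AlternatingMap.map_perm _ v σ)

lemma wedge_append_shuffle (i j : ℕ) (S : Finset (Fin (i + j))) (hS : S.card = i)
    (hSc : Sᶜ.card = j) (v : Fin (i + j) → V) :
    wedge 𝕜 V (i + j)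
        (Fin.append (fun k => v (S.orderIsoOfFin hS k)) (fun k => v ((Sᶜ).orderIsoOfFin hSc k)))
      = (Equiv.Perm.sign (shufflePerm i j S hS) : ℤ) • wedge 𝕜 V (i + j) v := by
  rw [append_comp_orderIsoOfFin_eq_comp_shufflePerm, wedge_comp_perm]

/-- For a field `𝕜` of characteristic `0` and `i, j ∈ ℕ`, the composite of
the comultiplication `Λ^{i+j}V → Λ^iV ⊗ Λ^jV` of the exterior bialgebra (the `(i,j)`-th
component of the coproduct determined by `Δ(v) = v⊗1 + 1⊗v`, characterized on wedges by the
signed sum over `(i,j)`-shuffles) with the multiplication `Λ^iV ⊗ Λ^jV → Λ^{i+j}V` (the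
wedge product) equals multiplication by the binomial coefficient `C(i+j, i)` on
`Λ^{i+j}V`. -/
theorem stmt_18 (𝕜 : Type) [Field 𝕜] (V : Type) [AddCommGroup V] [Module 𝕜 V]
    (i j : ℕ)
    (Δ : (⋀[𝕜]^(i+j) V) →ₗ[𝕜] ((⋀[𝕜]^i V) ⊗[𝕜] (⋀[𝕜]^j V)))
    (hΔ : ∀ v : Fin (i + j) → V,
      Δ (wedge 𝕜 V (i+j) v) =
        ∑ S ∈ (Finset.powersetCard i (Finset.univ : Finset (Fin (i+j)))).attach,
          ((Equiv.Perm.sign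
              (shufflePerm i j S.1 (Finset.mem_powersetCard.mp S.2).2) : ℤ) •
            (wedge 𝕜 V i
                (fun k => v (S.1.orderIsoOfFin (Finset.mem_powersetCard.mp S.2).2 k)) ⊗ₜ[𝕜]
              wedge 𝕜 V j
                (fun k => v ((S.1ᶜ).orderIsoOfFin
                  (by simp [Finset.card_compl, (Finset.mem_powersetCard.mp S.2).2]) k)))))
    (mul : ((⋀[𝕜]^i V) ⊗[𝕜] (⋀[𝕜]^j V)) →ₗ[𝕜] (⋀[𝕜]^(i+j) V))
    (hmul : ∀ (v : Fin i → V) (w : Fin j → V),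
      mul (wedge 𝕜 V i v ⊗ₜ[𝕜] wedge 𝕜 V j w) = wedge 𝕜 V (i+j) (Fin.append v w)) :
    mul.comp Δ = ((i+j).choose i : 𝕜) • LinearMap.id := by
  refine LinearMap.ext_on (span_range_wedge 𝕜 V (i + j)) ?_
  rintro _ ⟨v, rfl⟩
  -- the sign of each shuffle term cancels against the sign of reordering its wedge
  have shuffle_term : ∀ (S : Finset (Fin (i + j))) (hS : S.card = i) (hSc : Sᶜ.card = j),
      mul ((Equiv.Perm.sign (shufflePerm i j S hS) : ℤ) •
          (wedge 𝕜 V i (fun k => v (S.orderIsoOfFin hS k)) ⊗ₜ[𝕜]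
            wedge 𝕜 V j (fun k => v ((Sᶜ).orderIsoOfFin hSc k))))
        = wedge 𝕜 V (i + j) v := by
    intro S hS hSc
    rw [map_zsmul, hmul, wedge_append_shuffle, smul_smul, ← Units.val_mul,
      Int.units_mul_self, Units.val_one, one_smul]
  rw [LinearMap.comp_apply, hΔ, map_sum,
    Finset.sum_congr rfl fun S _ => shuffle_term S.1 (Finset.mem_powersetCard.mp S.2).2 _,
    Finset.sum_const, Finset.card_attach, Finset.card_powersetCard, Finset.card_univ,
    Fintype.card_fin, LinearMap.smul_apply, LinearMap.id_apply, Nat.cast_smul_eq_nsmul]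
end
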